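/- Let $(a_n)$ and $(b_n)$ be strictly increasing sequences of positive integers with $L_n = b_n/a_n \to L = p/q$, where $p, q \in \mathbb{N}$ are relatively prime, and set $\delta_n = L_n - L$. Suppose $\delta_n < 0$ for all $n$ and $a_n |\delta_n| \to k \in (0, \infty)$. Then for every $m \in \mathbb{Z}$ and every $t > 0$, $\frac{1}{a_n} \sum_{j=1}^{\lfloor a_n t \rfloor} \widehat{f}_{m,L}(j L_n) \to \frac{1}{q} \sum_{\eta=1}^{q} \frac{1}{k} \int_0^{k t} \widehat{f}_{m,L}(\eta L - x)\, dx$ as $n \to \infty$. -/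

import Mathlib

open Filter MeasureTheory

/-- `f_{m,L}(x) = (|x-m+1|^{1/3} + |x-m-L|^{1/3} - |x-m|^{1/3} - |x-m+1-L|^{1/3})^3`. -/
noncomputable def fmL (L : ℝ) (m : ℤ) (x : ℝ) : ℝ :=
  (|x - m + 1| ^ ((1 : ℝ) / 3) + |x - m - L| ^ ((1 : ℝ) / 3)
    - |x - m| ^ ((1 : ℝ) / 3) - |x - m + 1 - L| ^ ((1 : ℝ) / 3)) ^ 3

/-- `f̂_{m,L}(x) = f_{m,L}({x})`, where `{x}` is the fractional part of `x`. -/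
noncomputable def fmLhat (L : ℝ) (m : ℤ) (x : ℝ) : ℝ := fmL L m (Int.fract x)

/-!
Since `q a_n |δ_n| = |q b_n - p a_n|` is an integer sequence converging to `q k`, it is eventually
equal to `q k`, so eventually `L_n = L - k / a_n` exactly. Writing `j = q i + η` with `1 ≤ η ≤ q`
and using that `f̂` has period `1` and `q L = p ∈ ℤ`, we get
`f̂(j L_n) = f̂(η L - (i · q k / a_n + η k / a_n))`. For each residue `η` the sum over `i` is thus a
Riemann sum of mesh `q k / a_n` for `x ↦ f̂(η L - x)` on `[0, k t]`; this function is bounded and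
continuous off a countable set, so these Riemann sums converge to its integral.
-/

open Topology Finset

theorem continuous_fmL (L : ℝ) (m : ℤ) : Continuous (fmL L m) := by
  unfold fmL
  fun_prop (disch := norm_num)

theorem exists_abs_le_comp_fract {g : ℝ → ℝ} (hg : Continuous g) :
    ∃ C, ∀ x, |g (Int.fract x)| ≤ C := by
  obtain ⟨C, hC⟩ := (isCompact_Icc (a := (0 : ℝ)) (b := 1)).exists_bound_of_continuousOn
    hg.continuousOn
  exact ⟨C, fun x => hC _ ⟨Int.fract_nonneg x, (Int.fract_lt_one x).le⟩⟩

theorem ae_continuousAt_comp_fract_sub {g : ℝ → ℝ} (hg : Continuous g) (s : ℝ) :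
    ∀ᵐ x, ContinuousAt (fun x => g (Int.fract (s - x))) x := by
  refine measure_mono_null (fun x hx => ?_)
    ((Set.countable_range fun z : ℤ => s - z).measure_zero _)
  by_contra hxs
  refine hx (hg.continuousAt.comp ((continuousAt_fract fun h => hxs ⟨⌊s - x⌋, ?_⟩).comp
    (continuousAt_const.sub continuousAt_id)))
  simp only [Pi.sub_apply, id] at h ⊢
  linarith

theorem exists_eventually_eq_of_tendsto_intCast {α : Type*} {l : Filter α} [l.NeBot]
    {e : α → ℤ} {x : ℝ} (h : Tendsto (fun n => (e n : ℝ)) l (𝓝 x)) :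
    ∃ z : ℤ, (z : ℝ) = x ∧ ∀ᶠ n in l, e n = z := by
  obtain ⟨z, rfl⟩ : x ∈ Set.range ((↑) : ℤ → ℝ) :=
    Int.isClosedEmbedding_coe_real.isClosed_range.mem_of_tendsto h
      (Eventually.of_forall fun n => ⟨e n, rfl⟩)
  refine ⟨z, rfl, ?_⟩
  have := (Int.isClosedEmbedding_coe_real.tendsto_nhds_iff (g := e)).2 h
  rwa [nhds_discrete, tendsto_pure] at this

theorem floor_div_eq_of_mem_Ioo {Δ : ℝ} (hΔ : 0 < Δ) {i : ℕ} {x : ℝ}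
    (hx : x ∈ Set.Ioo (i * Δ) ((i + 1) * Δ)) : ⌊x / Δ⌋ = i := by
  rw [Int.floor_eq_iff, le_div_iff₀ hΔ, div_lt_iff₀ hΔ]
  push_cast
  exact ⟨hx.1.le, hx.2⟩

theorem integral_floor_step (h : ℝ → ℝ) {Δ : ℝ} (hΔ : 0 < Δ) (off : ℝ) (M : ℕ) :
    ∫ x in (0 : ℝ)..M * Δ, h (⌊x / Δ⌋ * Δ + off) = Δ * ∑ i ∈ range M, h (i * Δ + off) := by
  have hpiece : ∀ i : ℕ, Set.EqOn (fun x => h (⌊x / Δ⌋ * Δ + off)) (fun _ => h (i * Δ + off))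
      (Set.uIoo (i * Δ) ((i + 1 : ℕ) * Δ)) := fun i x hx => by
    rw [Set.uIoo_of_le (by gcongr; omega), Nat.cast_succ] at hx
    simp only [floor_div_eq_of_mem_Ioo hΔ hx, Int.cast_natCast]
  have hint : ∀ i < M, IntervalIntegrable (fun x => h (⌊x / Δ⌋ * Δ + off)) volume
      (i * Δ) ((i + 1 : ℕ) * Δ) := fun i _ =>
    (intervalIntegrable_congr_uIoo (hpiece i)).2 intervalIntegrable_const
  rw [← zero_mul Δ, ← Nat.cast_zero, ← intervalIntegral.sum_integral_adjacent_intervals hint,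
    mul_sum]
  refine sum_congr rfl fun i _ => ?_
  rw [intervalIntegral.integral_congr_uIoo (hpiece i), intervalIntegral.integral_const, smul_eq_mul]
  push_cast
  ring

theorem tendsto_floor_div_mul_add {Δ off : ℕ → ℝ} (hΔ : ∀ n, 0 < Δ n)
    (hΔ0 : Tendsto Δ atTop (𝓝 0)) (hoff : Tendsto off atTop (𝓝 0)) (x : ℝ) :
    Tendsto (fun n => ⌊x / Δ n⌋ * Δ n + off n) atTop (𝓝 x) := by
  have hfract : Tendsto (fun n => Int.fract (x / Δ n) * Δ n) atTop (𝓝 0) :=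
    squeeze_zero (fun n => mul_nonneg (Int.fract_nonneg _) (hΔ n).le)
      (fun n => mul_le_of_le_one_left (hΔ n).le (Int.fract_lt_one _).le) hΔ0
  have hfloor : ∀ n, (⌊x / Δ n⌋ : ℝ) * Δ n = x - Int.fract (x / Δ n) * Δ n := fun n => by
    rw [← Int.self_sub_fract, sub_mul, div_mul_cancel₀ x (hΔ n).ne']
  simp only [hfloor]
  simpa using (tendsto_const_nhds.sub hfract).add hoff

theorem measurable_floor_step {h : ℝ → ℝ} (hh : Measurable h) (Δ off : ℝ) :
    Measurable fun x => h (⌊x / Δ⌋ * Δ + off) := by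
  fun_prop

theorem tendsto_integral_floor_step {h : ℝ → ℝ} (hh : Measurable h) {C : ℝ}
    (hC : ∀ x, |h x| ≤ C) (hcont : ∀ᵐ x, ContinuousAt h x) {Δ off : ℕ → ℝ}
    (hΔ : ∀ n, 0 < Δ n) (hΔ0 : Tendsto Δ atTop (𝓝 0)) (hoff : Tendsto off atTop (𝓝 0))
    (B : ℝ) :
    Tendsto (fun n => ∫ x in (0 : ℝ)..B, h (⌊x / Δ n⌋ * Δ n + off n)) atTop
      (𝓝 (∫ x in (0 : ℝ)..B, h x)) := by
  refine intervalIntegral.tendsto_integral_filter_of_dominated_convergence (fun _ => C)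
    (Eventually.of_forall fun n => ?_) (Eventually.of_forall fun n => ae_of_all _ fun x _ => hC _)
    intervalIntegrable_const ?_
  · exact (measurable_floor_step hh _ _).aestronglyMeasurable
  · filter_upwards [hcont] with x hx _
    exact hx.tendsto.comp (tendsto_floor_div_mul_add hΔ hΔ0 hoff x)

theorem tendsto_riemann_sum {h : ℝ → ℝ} (hh : Measurable h) {C : ℝ}
    (hC : ∀ x, |h x| ≤ C) (hcont : ∀ᵐ x, ContinuousAt h x) {Δ off : ℕ → ℝ}
    (hΔ : ∀ n, 0 < Δ n) (hΔ0 : Tendsto Δ atTop (𝓝 0)) (hoff : Tendsto off atTop (𝓝 0))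
    {M : ℕ → ℕ} {B : ℝ} (hM : Tendsto (fun n => M n * Δ n) atTop (𝓝 B)) :
    Tendsto (fun n => Δ n * ∑ i ∈ range (M n), h (i * Δ n + off n)) atTop
      (𝓝 (∫ x in (0 : ℝ)..B, h x)) := by
  have hint : ∀ n u v, IntervalIntegrable (fun x => h (⌊x / Δ n⌋ * Δ n + off n)) volume u v :=
    fun n u v => intervalIntegrable_const.mono_fun'
      (measurable_floor_step hh _ _).aestronglyMeasurable (ae_of_all _ fun x => hC _)
  have htail : Tendsto (fun n => ∫ x in B..M n * Δ n, h (⌊x / Δ n⌋ * Δ n + off n)) atTop (𝓝 0) := by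
    refine squeeze_zero_norm (fun n => intervalIntegral.norm_integral_le_of_norm_le_const
      fun x _ => hC _) ?_
    simpa using ((hM.sub_const B).abs.const_mul C)
  have hsplit : ∀ n, Δ n * ∑ i ∈ range (M n), h (i * Δ n + off n) =
      (∫ x in (0 : ℝ)..B, h (⌊x / Δ n⌋ * Δ n + off n)) +
        ∫ x in B..M n * Δ n, h (⌊x / Δ n⌋ * Δ n + off n) := fun n => by
    rw [← integral_floor_step h (hΔ n),
      intervalIntegral.integral_add_adjacent_intervals (hint n 0 B) (hint n B _)]
  simp only [hsplit]
  simpa using (tendsto_integral_floor_step hh hC hcont hΔ hΔ0 hoff B).add htail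

theorem sum_int_Icc_one_eq_sum_Icc_toNat {M : Type*} [AddCommMonoid M] (N : ℤ) (F : ℤ → M) :
    ∑ j ∈ Icc (1 : ℤ) N, F j = ∑ j ∈ Icc 1 N.toNat, F j := by
  have : Icc (1 : ℤ) N = (Icc 1 N.toNat).map Nat.castEmbedding := by
    ext j
    simp only [mem_Icc, Finset.mem_map, Nat.castEmbedding_apply]
    constructor
    · intro hj
      exact ⟨j.toNat, by omega, by omega⟩
    · rintro ⟨i, hi, rfl⟩
      omega
  rw [this, sum_map]
  rfl

theorem lt_div_iff_mul_add_le {q η N i : ℕ} (hq : 0 < q) (hη : η ≤ q) :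
    i < (N + q - η) / q ↔ q * i + η ≤ N := by
  rw [Nat.lt_iff_add_one_le, Nat.le_div_iff_mul_le hq, add_mul, one_mul, mul_comm]
  omega

theorem sum_Icc_eq_sum_sum_residues {M : Type*} [AddCommMonoid M] {q : ℕ} (hq : 0 < q)
    (N : ℕ) (F : ℕ → M) :
    ∑ j ∈ Icc 1 N, F j = ∑ η ∈ Icc 1 q, ∑ i ∈ range ((N + q - η) / q), F (q * i + η) := by
  rw [sum_sigma']
  refine sum_nbij' (fun j => ⟨(j - 1) % q + 1, (j - 1) / q⟩) (fun x => q * x.2 + x.1)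
    ?_ ?_ ?_ ?_ ?_
  · intro j hj
    simp only [mem_Icc, mem_sigma, mem_range] at hj ⊢
    have := Nat.mod_lt (j - 1) hq
    have := Nat.div_add_mod (j - 1) q
    refine ⟨by omega, (lt_div_iff_mul_add_le hq (by omega)).2 (by omega)⟩
  · rintro ⟨η, i⟩ h
    simp only [mem_Icc, mem_sigma, mem_range] at h ⊢
    have := (lt_div_iff_mul_add_le hq h.1.2).1 h.2
    omega
  · intro j hj
    simp only [mem_Icc] at hj
    have := Nat.div_add_mod (j - 1) q
    dsimp only
    omega
  · rintro ⟨η, i⟩ h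
    simp only [mem_Icc, mem_sigma, mem_range] at h
    have hmod : (q * i + η - 1) % q = η - 1 := by
      rw [show q * i + η - 1 = (η - 1) + q * i by omega, Nat.add_mul_mod_self_left,
        Nat.mod_eq_of_lt (by omega)]
    have hdiv : (q * i + η - 1) / q = i := by
      rw [show q * i + η - 1 = (η - 1) + q * i by omega, Nat.add_mul_div_left _ _ hq,
        Nat.div_eq_of_lt (by omega), zero_add]
    dsimp only
    rw [hmod, hdiv, Nat.sub_add_cancel h.1.1]
  · intro j hj
    simp only [mem_Icc] at hj
    have := Nat.div_add_mod (j - 1) q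
    dsimp only
    congr 1
    omega

theorem eventually_mul_abs_div_sub_eq {a b : ℕ → ℕ} (ha : ∀ n, 0 < a n) {p q : ℕ} (hq : 0 < q)
    {k : ℝ} (hk : Tendsto (fun n => (a n : ℝ) * |(b n : ℝ) / a n - p / q|) atTop (𝓝 k)) :
    ∀ᶠ n in atTop, (a n : ℝ) * |(b n : ℝ) / a n - p / q| = k := by
  have hcast : ∀ n, ((|(q : ℤ) * b n - p * a n| : ℤ) : ℝ) =
      q * ((a n : ℝ) * |(b n : ℝ) / a n - p / q|) := fun n => by
    have ha' : (0 : ℝ) < a n := Nat.cast_pos.2 (ha n)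
    have hq' : (0 : ℝ) < q := Nat.cast_pos.2 hq
    calc ((|(q : ℤ) * b n - p * a n| : ℤ) : ℝ) = |(q : ℝ) * a n * ((b n : ℝ) / a n - p / q)| := by
          push_cast
          congr 1
          field_simp
      _ = q * ((a n : ℝ) * |(b n : ℝ) / a n - p / q|) := by
          rw [abs_mul, abs_mul, abs_of_pos ha', abs_of_pos hq', mul_assoc]
  obtain ⟨z, hz, hev⟩ := exists_eventually_eq_of_tendsto_intCast
    (e := fun n => |(q : ℤ) * b n - p * a n|) (by simpa only [hcast] using hk.const_mul (q : ℝ))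
  filter_upwards [hev] with n hn
  have := hcast n
  rw [hn, hz] at this
  exact (mul_left_cancel₀ (Nat.cast_pos.2 hq).ne' this).symm

theorem eventually_div_eq_sub_div {a b : ℕ → ℕ} (ha : ∀ n, 0 < a n) {p q : ℕ} (hq : 0 < q)
    {k : ℝ} (hk : Tendsto (fun n => (a n : ℝ) * |(b n : ℝ) / a n - p / q|) atTop (𝓝 k))
    (hneg : ∀ n, (b n : ℝ) / a n - p / q < 0) :
    ∀ᶠ n in atTop, (b n : ℝ) / a n = p / q - k / a n := by
  filter_upwards [eventually_mul_abs_div_sub_eq ha hq hk] with n hn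
  have : (a n : ℝ) ≠ 0 := Nat.cast_ne_zero.2 (ha n).ne'
  rw [abs_of_neg (hneg n)] at hn
  field_simp at hn ⊢
  linarith

theorem tendsto_div_of_abs_sub_le {A X : ℕ → ℝ} (hA : Tendsto A atTop atTop) {K t : ℝ}
    (h : ∀ n, |X n - A n * t| ≤ K) : Tendsto (fun n => X n / A n) atTop (𝓝 t) := by
  have h0 : Tendsto (fun n => (X n - A n * t) / A n) atTop (𝓝 0) := by
    refine squeeze_zero_norm' ?_ ((tendsto_const_nhds (x := K)).div_atTop hA)
    filter_upwards [hA.eventually_gt_atTop 0] with n hn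
    rw [norm_div, Real.norm_of_nonneg hn.le]
    exact div_le_div_of_nonneg_right (h n) hn.le
  rw [← zero_add t]
  refine (h0.add_const t).congr' ?_
  filter_upwards [hA.eventually_gt_atTop 0] with n hn
  field_simp
  ring

theorem abs_mul_div_floor_sub_le {q η : ℕ} (hq : 0 < q) (hη : η ≤ q) {x : ℝ} (hx : 0 ≤ x) :
    |((q * ((⌊x⌋₊ + q - η) / q) : ℕ) : ℝ) - x| ≤ q + 1 := by
  have hdiv := Nat.div_add_mod (⌊x⌋₊ + q - η) q
  have hmod := Nat.mod_lt (⌊x⌋₊ + q - η) hq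
  have hlow : ⌊x⌋₊ < q * ((⌊x⌋₊ + q - η) / q) + q := by omega
  have hup : q * ((⌊x⌋₊ + q - η) / q) ≤ ⌊x⌋₊ + q := by omega
  have := Nat.floor_le hx
  have := Nat.lt_floor_add_one x
  rw [abs_le]
  constructor
  · have : ((⌊x⌋₊ : ℕ) : ℝ) < ((q * ((⌊x⌋₊ + q - η) / q) : ℕ) : ℝ) + q := by exact_mod_cast hlow
    linarith
  · have : ((q * ((⌊x⌋₊ + q - η) / q) : ℕ) : ℝ) ≤ (⌊x⌋₊ : ℝ) + q := by exact_mod_cast hup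
    linarith

theorem fmLhat_add_natCast (L : ℝ) (m : ℤ) (x : ℝ) (z : ℕ) :
    fmLhat L m (x + z) = fmLhat L m x := by
  rw [fmLhat, fmLhat, Int.fract_add_natCast]

theorem fmLhat_mul_sub_div {p q : ℕ} (hq : 0 < q) (m : ℤ) (k A : ℝ) (i η : ℕ) :
    fmLhat (p / q) m ((q * i + η : ℕ) * (p / q - k / A)) =
      fmLhat (p / q) m (η * (p / q) - (i * (q * k / A) + η * k / A)) := by
  have : (q : ℝ) ≠ 0 := Nat.cast_ne_zero.2 hq.ne'
  rw [← fmLhat_add_natCast _ _ (η * (p / q) - _) (i * p)]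
  congr 1
  push_cast
  field_simp
  ring

theorem one_div_mul_sum_fmLhat_eq_sum_residues {p q : ℕ} (hq : 0 < q) (m : ℤ) {k A : ℝ}
    (hk : k ≠ 0) (hA : A ≠ 0) (t : ℝ) :
    1 / A * ∑ j ∈ Icc (1 : ℤ) ⌊A * t⌋, fmLhat (p / q) m (j * (p / q - k / A)) =
      ∑ η ∈ Icc 1 q, 1 / (q * k) * (q * k / A * ∑ i ∈ range ((⌊A * t⌋₊ + q - η) / q),
        fmLhat (p / q) m (η * (p / q) - (i * (q * k / A) + η * k / A))) := by
  have hcoef : 1 / ((q : ℝ) * k) * (q * k / A) = 1 / A := by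
    field_simp [Nat.cast_ne_zero.2 hq.ne']
  rw [sum_int_Icc_one_eq_sum_Icc_toNat, Int.floor_toNat, sum_Icc_eq_sum_sum_residues hq, mul_sum]
  refine sum_congr rfl fun η _ => ?_
  rw [← mul_assoc, hcoef, mul_sum, mul_sum]
  refine sum_congr rfl fun i _ => ?_
  rw [Int.cast_natCast, fmLhat_mul_sub_div hq]

theorem tendsto_riemann_sum_fmLhat (L : ℝ) (m : ℤ) (s : ℝ) {A : ℕ → ℝ}
    (hA : Tendsto A atTop atTop) (hA0 : ∀ n, 0 < A n) {q η : ℕ} (hq : 0 < q) (hη : η ≤ q)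
    {k t : ℝ} (hk : 0 < k) (ht : 0 ≤ t) :
    Tendsto (fun n => q * k / A n * ∑ i ∈ range ((⌊A n * t⌋₊ + q - η) / q),
        fmLhat L m (s - (i * (q * k / A n) + η * k / A n))) atTop
      (𝓝 (∫ x in (0 : ℝ)..k * t, fmLhat L m (s - x))) := by
  obtain ⟨C, hC⟩ := exists_abs_le_comp_fract (continuous_fmL L m)
  have hcount : Tendsto (fun n => ((⌊A n * t⌋₊ + q - η) / q : ℕ) * (q * k / A n)) atTop
      (𝓝 (k * t)) := by
    refine ((tendsto_div_of_abs_sub_le hA fun n => abs_mul_div_floor_sub_le hq hη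
      (mul_nonneg (hA0 n).le ht)).const_mul k).congr fun n => ?_
    push_cast
    ring
  exact tendsto_riemann_sum ((continuous_fmL L m).measurable.comp
      (measurable_fract.comp (measurable_const.sub measurable_id))) (fun x => hC _)
    (ae_continuousAt_comp_fract_sub (continuous_fmL L m) s)
    (fun n => div_pos (mul_pos (Nat.cast_pos.2 hq) hk) (hA0 n))
    (tendsto_const_nhds.div_atTop hA) (tendsto_const_nhds.div_atTop hA) hcount

theorem sum_tendsto_negative_delta_case_general (a b : ℕ → ℕ) (ha : StrictMono a)
    (ha0 : ∀ n, 0 < a n)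
    (p q : ℕ) (hq : 0 < q)
    (L : ℝ) (hL : L = (p : ℝ) / (q : ℝ))
    (hneg : ∀ n, (b n : ℝ) / (a n : ℝ) - L < 0)
    (k : ℝ) (hkpos : 0 < k)
    (hk : Tendsto (fun n => (a n : ℝ) * |(b n : ℝ) / (a n : ℝ) - L|) atTop (nhds k)) :
    ∀ (m : ℤ) (t : ℝ), 0 < t →
      Tendsto (fun n =>
        (1 / (a n : ℝ)) * ∑ j ∈ Finset.Icc (1 : ℤ) ⌊(a n : ℝ) * t⌋,
            fmLhat L m ((j : ℝ) * ((b n : ℝ) / (a n : ℝ))))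
        atTop
        (nhds ((1 / (q : ℝ)) * ∑ η ∈ Finset.Icc 1 q,
          (1 / k) * ∫ x in (0 : ℝ)..(k * t), fmLhat L m ((η : ℝ) * L - x))) := by
  intro m t ht
  subst hL
  have hA0 : ∀ n, (0 : ℝ) < a n := fun n => Nat.cast_pos.2 (ha0 n)
  have htarget : (1 / (q : ℝ)) * ∑ η ∈ Icc 1 q,
      (1 / k) * ∫ x in (0 : ℝ)..k * t, fmLhat (p / q) m (η * (p / q) - x) =
      ∑ η ∈ Icc 1 q, 1 / (q * k) * ∫ x in (0 : ℝ)..k * t, fmLhat (p / q) m (η * (p / q) - x) := by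
    rw [mul_sum]
    exact sum_congr rfl fun η _ => by rw [← mul_assoc, one_div_mul_one_div]
  rw [htarget]
  refine (tendsto_finsetSum _ fun η hη => ((tendsto_riemann_sum_fmLhat _ m _
    (tendsto_natCast_atTop_atTop.comp ha.tendsto_atTop) hA0 hq (mem_Icc.1 hη).2 hkpos
    ht.le).const_mul _)).congr' ?_
  filter_upwards [eventually_div_eq_sub_div ha0 hq hk hneg] with n hn
  rw [hn, one_div_mul_sum_fmLhat_eq_sum_residues hq m hkpos.ne' (hA0 n).ne' t]
  rfl

/-- If `L = p/q` in lowest terms, `L_n = b_n/a_n → L`, `δ_n < 0` for all `n`, and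
`a_n |δ_n| → k ∈ (0,∞)`, then for every `m ∈ ℤ` and `t > 0`,
`(1/a_n) ∑_{j=1}^{⌊a_n t⌋} f̂_{m,L}(j L_n)
  → (1/q) ∑_{η=1}^{q} (1/k) ∫_0^{kt} f̂_{m,L}(ηL - x) dx`. -/
theorem sum_tendsto_negative_delta_case (a b : ℕ → ℕ) (ha : StrictMono a) (hb : StrictMono b)
    (ha0 : ∀ n, 0 < a n) (hb0 : ∀ n, 0 < b n)
    (p q : ℕ) (hp : 0 < p) (hq : 0 < q) (hpq : Nat.Coprime p q)
    (L : ℝ) (hL : L = (p : ℝ) / (q : ℝ))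
    (hconv : Tendsto (fun n => (b n : ℝ) / (a n : ℝ)) atTop (nhds L))
    (hneg : ∀ n, (b n : ℝ) / (a n : ℝ) - L < 0)
    (k : ℝ) (hkpos : 0 < k)
    (hk : Tendsto (fun n => (a n : ℝ) * |(b n : ℝ) / (a n : ℝ) - L|) atTop (nhds k)) :
    ∀ (m : ℤ) (t : ℝ), 0 < t →
      Tendsto (fun n =>
        (1 / (a n : ℝ)) * ∑ j ∈ Finset.Icc (1 : ℤ) ⌊(a n : ℝ) * t⌋,
            fmLhat L m ((j : ℝ) * ((b n : ℝ) / (a n : ℝ))))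
        atTop
        (nhds ((1 / (q : ℝ)) * ∑ η ∈ Finset.Icc 1 q,
          (1 / k) * ∫ x in (0 : ℝ)..(k * t), fmLhat L m ((η : ℝ) * L - x))) :=
  sum_tendsto_negative_delta_case_general a b ha ha0 p q hq L hL hneg k hkpos hk
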